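/- arXiv:0706.2851 — 2 statements merged into one kernel-verified Lean document; each statement's English description precedes it below -/
import Mathlib

section
/- There exists a constant c > 0 such that for all nonnegative integers l and l₁ with l₁ even, l₁ ≥ 2 and l₁ ≤ 2l, one has |C(l, l₁, l)| ≤ c · (2l + 1)^{1/4} / ( l₁^{1/2} · (2l − l₁ + 1)^{1/4} ). -/
open scoped BigOperators

noncomputable section

/-- Zero-projection Clebsch–Gordan coefficient of `SO(3)`. -/
def CG0 (l₁ l₂ l₃ : ℕ) : ℝ :=
  if Even (l₁ + l₂ + l₃) ∧ l₃ ≤ l₁ + l₂ ∧ l₁ ≤ l₂ + l₃ ∧ l₂ ≤ l₁ + l₃ then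
    (-1 : ℝ) ^ ((l₁ + l₂ + l₃) / 2 - l₃) * Real.sqrt (2 * (l₃ : ℝ) + 1) *
      (((l₁ + l₂ + l₃) / 2).factorial : ℝ) /
      ((((l₁ + l₂ + l₃) / 2 - l₃).factorial : ℝ) * (((l₁ + l₂ + l₃) / 2 - l₂).factorial : ℝ) *
        (((l₁ + l₂ + l₃) / 2 - l₁).factorial : ℝ)) *
      Real.sqrt ((((l₁ + l₂ - l₃).factorial : ℝ) * ((l₁ + l₃ - l₂).factorial : ℝ) *
        ((l₂ + l₃ - l₁).factorial : ℝ)) / ((l₁ + l₂ + l₃ + 1).factorial : ℝ))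
  else 0

open Nat

lemma cb_upper (n : ℕ) : centralBinom n ^ 2 * (2*n+1) ≤ 4^(2*n) := by
  induction n with
  | zero => simp [centralBinom]
  | succ n ih =>
    have key : (n+1) * centralBinom (n+1) = 2 * (2*n+1) * centralBinom n :=
      succ_mul_centralBinom_succ n
    have h1 : (n+1)^2 * (centralBinom (n+1)^2 * (2*(n+1)+1)) ≤ (n+1)^2 * 4^(2*(n+1)) := by
      have e : (n+1)^2 * (centralBinom (n+1)^2 * (2*(n+1)+1))
          = (4*(2*n+1)*(2*n+3)) * (centralBinom n ^2 * (2*n+1)) := by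
        have := congrArg (· ^ 2) key
        simp only [mul_pow] at this
        nlinarith [this]
      rw [e]
      calc (4*(2*n+1)*(2*n+3)) * (centralBinom n ^2 * (2*n+1))
          ≤ (4*(2*n+1)*(2*n+3)) * 4^(2*n) := by
            exact Nat.mul_le_mul_left _ ih
        _ ≤ (n+1)^2 * 4^(2*(n+1)) := by
            have : 4*(2*n+1)*(2*n+3) ≤ (n+1)^2 * 16 := by nlinarith
            calc (4*(2*n+1)*(2*n+3)) * 4^(2*n) ≤ ((n+1)^2*16) * 4^(2*n) :=
                Nat.mul_le_mul_right _ this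
              _ = (n+1)^2 * 4^(2*(n+1)) := by ring
    exact Nat.le_of_mul_le_mul_left h1 (by positivity)

-- lower bound: 4^(2n) ≤ 4n * B(n)^2 for n ≥ 1
lemma cb_lower (n : ℕ) (hn : 1 ≤ n) : 4^(2*n) ≤ 4*n*centralBinom n ^2 := by
  induction n with
  | zero => omega
  | succ n ih =>
    rcases Nat.eq_or_lt_of_le hn with h | h
    · simp [← h]; decide
    · have hn1 : 1 ≤ n := by omega
      have ih' := ih hn1
      have key : (n+1) * centralBinom (n+1) = 2 * (2*n+1) * centralBinom n :=
        succ_mul_centralBinom_succ n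
      have h1 : (n*(n+1)^2) * 4^(2*(n+1)) ≤ (n*(n+1)^2) * (4*(n+1)*centralBinom (n+1)^2) := by
        have this2 : (n+1)^2 * centralBinom (n+1)^2 = 2^2*(2*n+1)^2*centralBinom n^2 := by
          have := congrArg (· ^ 2) key
          simpa [mul_pow] using this
        have e : (n*(n+1)^2) * (4*(n+1)*centralBinom (n+1)^2)
            = (4*(n+1)*(2*n+1)^2) * (4*n*centralBinom n^2) := by
          calc (n*(n+1)^2) * (4*(n+1)*centralBinom (n+1)^2)
              = 4*n*(n+1)*((n+1)^2*centralBinom (n+1)^2) := by ring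
            _ = 4*n*(n+1)*(2^2*(2*n+1)^2*centralBinom n^2) := by rw [this2]
            _ = (4*(n+1)*(2*n+1)^2) * (4*n*centralBinom n^2) := by ring
        rw [e]
        calc (n*(n+1)^2) * 4^(2*(n+1)) = (16*n*(n+1)^2) * 4^(2*n) := by ring
          _ ≤ (4*(n+1)*(2*n+1)^2) * 4^(2*n) := by
              apply Nat.mul_le_mul_right; nlinarith
          _ ≤ (4*(n+1)*(2*n+1)^2) * (4*n*centralBinom n^2) := Nat.mul_le_mul_left _ ih'
      exact Nat.le_of_mul_le_mul_left h1 (by positivity)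


lemma cb_cast (n : ℕ) : (centralBinom n : ℝ) = ((2*n).factorial : ℝ) / ((n.factorial : ℝ) * (n.factorial : ℝ)) := by
  have h : 2*n - n = n := by omega
  rw [centralBinom_eq_two_mul_choose, Nat.cast_choose ℝ (by omega : n ≤ 2*n), h]

lemma cg0_sq (m k : ℕ) :
    (CG0 (m+k) (2*m) (m+k))^2 =
      (2*(m+k)+1 : ℝ) * (centralBinom m : ℝ)^2 * (centralBinom k : ℝ) /
        ((4*m+2*k+1 : ℝ) * (centralBinom (2*m+k) : ℝ)) := by
  have hcond : Even ((m+k) + 2*m + (m+k)) ∧ (m+k) ≤ (m+k) + 2*m ∧ (m+k) ≤ 2*m + (m+k)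
      ∧ 2*m ≤ (m+k) + (m+k) := by
    refine ⟨⟨2*m+k, by ring⟩, by omega, by omega, by omega⟩
  rw [CG0, if_pos hcond]
  have e1 : ((m+k) + 2*m + (m+k))/2 = 2*m+k := by omega
  have e2 : 2*m+k - (m+k) = m := by omega
  have e3 : 2*m+k - 2*m = k := by omega
  have e4 : (m+k) + 2*m - (m+k) = 2*m := by omega
  have e5 : (m+k) + (m+k) - 2*m = 2*k := by omega
  have e6 : 2*m + (m+k) - (m+k) = 2*m := by omega
  have e7 : (m+k) + 2*m + (m+k) + 1 = 4*m+2*k+1 := by omega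
  rw [e1, e2, e3, e4, e5, e6, e7]
  have hR : (0:ℝ) ≤ (((2*m).factorial : ℝ) * ((2*k).factorial : ℝ) * ((2*m).factorial : ℝ))
      / ((4*m+2*k+1).factorial : ℝ) := by positivity
  have ha : (0:ℝ) ≤ 2*(((m+k):ℕ):ℝ)+1 := by positivity
  rw [mul_pow, div_pow, mul_pow, mul_pow, ← pow_mul, mul_comm m 2, pow_mul, neg_one_sq, one_pow,
    one_mul, Real.sq_sqrt ha, Real.sq_sqrt hR]
  have hfm : ((m.factorial : ℝ)) ≠ 0 := by positivity
  have hfk : ((k.factorial : ℝ)) ≠ 0 := by positivity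
  have hf1 : (((4*m+2*k+1).factorial : ℝ)) ≠ 0 := by positivity
  have hf2 : (((2*m+k).factorial : ℝ)) ≠ 0 := by positivity
  have hcb : ((centralBinom (2*m+k) : ℝ)) ≠ 0 := by
    exact_mod_cast (centralBinom_pos (2*m+k)).ne'
  have hq : ((4*m+2*k+1 : ℕ) : ℝ) ≠ 0 := by positivity
  rw [cb_cast, cb_cast, cb_cast]
  have hfact : (((4*m+2*k+1).factorial : ℝ)) = (4*m+2*k+1 : ℝ) * (((4*m+2*k).factorial : ℝ)) := by
    have : (4*m+2*k+1).factorial = (4*m+2*k+1) * (4*m+2*k).factorial := Nat.factorial_succ _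
    rw [this]; push_cast; ring
  have h2 : 2*(2*m+k) = 4*m+2*k := by ring
  rw [h2] at *
  rw [hfact]
  have hf3 : (((4*m+2*k).factorial : ℝ)) ≠ 0 := by positivity
  field_simp
  push_cast
  ring


lemma cb_upper_real (n : ℕ) :
    (centralBinom n : ℝ) * Real.sqrt (2*n+1) ≤ 4^n := by
  have h := cb_upper n
  have h' : ((centralBinom n : ℝ))^2 * (2*(n:ℝ)+1) ≤ ((4:ℝ)^n)^2 := by
    have := (Nat.cast_le (α := ℝ)).2 h
    push_cast at this
    calc ((centralBinom n : ℝ))^2 * (2*(n:ℝ)+1) = ((centralBinom n : ℝ))^2 * ((2*n+1 : ℕ) : ℝ) := by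
          push_cast; ring
      _ ≤ (4:ℝ)^(2*n) := by push_cast; nlinarith [this]
      _ = ((4:ℝ)^n)^2 := by rw [← pow_mul]; ring_nf
  have hs : (centralBinom n : ℝ) * Real.sqrt (2*n+1)
      = Real.sqrt (((centralBinom n : ℝ))^2 * (2*(n:ℝ)+1)) := by
    rw [Real.sqrt_mul (by positivity), Real.sqrt_sq (by positivity)]
  rw [hs]
  calc Real.sqrt (((centralBinom n : ℝ))^2 * (2*(n:ℝ)+1)) ≤ Real.sqrt (((4:ℝ)^n)^2) :=
        Real.sqrt_le_sqrt h'
    _ = (4:ℝ)^n := Real.sqrt_sq (by positivity)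

lemma cb_lower_real (n : ℕ) (hn : 1 ≤ n) :
    (4:ℝ)^n ≤ 2 * Real.sqrt n * (centralBinom n : ℝ) := by
  have h := cb_lower n hn
  have h' : ((4:ℝ)^n)^2 ≤ (2 * Real.sqrt n * (centralBinom n : ℝ))^2 := by
    have := (Nat.cast_le (α := ℝ)).2 h
    push_cast at this
    have e : (2 * Real.sqrt n * (centralBinom n : ℝ))^2
        = 4 * (n:ℝ) * ((centralBinom n : ℝ))^2 := by
      have : (Real.sqrt n)^2 = (n:ℝ) := Real.sq_sqrt (by positivity)
      nlinarith [this]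
    rw [e]
    calc ((4:ℝ)^n)^2 = (4:ℝ)^(2*n) := by rw [← pow_mul]; ring_nf
      _ ≤ 4 * (n:ℝ) * ((centralBinom n : ℝ))^2 := by nlinarith [this]
  calc (4:ℝ)^n = Real.sqrt (((4:ℝ)^n)^2) := (Real.sqrt_sq (by positivity)).symm
    _ ≤ Real.sqrt ((2 * Real.sqrt n * (centralBinom n : ℝ))^2) := Real.sqrt_le_sqrt h'
    _ = 2 * Real.sqrt n * (centralBinom n : ℝ) := Real.sqrt_sq (by positivity)

lemma quarter_sq {x : ℝ} (hx : 0 ≤ x) : (x ^ ((1:ℝ)/4))^2 = Real.sqrt x := by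
  rw [← Real.rpow_two, ← Real.rpow_mul hx, Real.sqrt_eq_rpow]
  norm_num

lemma half_sq {x : ℝ} (hx : 0 ≤ x) : (x ^ ((1:ℝ)/2))^2 = x := by
  rw [← Real.rpow_two, ← Real.rpow_mul hx]
  norm_num


set_option maxHeartbeats 1000000 in
/-- There is `c > 0` such that
`|C(l,l₁,l)| ≤ c (2l+1)^{1/4} / (l₁^{1/2} (2l−l₁+1)^{1/4})` for all `l` and all even
`2 ≤ l₁ ≤ 2l`. -/
theorem cg_refined_decay_bound :
    ∃ c : ℝ, 0 < c ∧ ∀ l l₁ : ℕ, Even l₁ → 2 ≤ l₁ → l₁ ≤ 2 * l →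
      |CG0 l l₁ l| ≤
        c * (2 * (l : ℝ) + 1) ^ ((1 : ℝ) / 4) /
          ((l₁ : ℝ) ^ ((1 : ℝ) / 2) * (2 * (l : ℝ) - (l₁ : ℝ) + 1) ^ ((1 : ℝ) / 4)) := by
  refine ⟨2, by norm_num, ?_⟩
  intro l l₁ heven h2 hle
  obtain ⟨m, hm'⟩ := heven
  have hl₁ : l₁ = 2*m := by omega
  subst hl₁
  obtain ⟨k, rfl⟩ : ∃ k, l = m + k := ⟨l - m, by omega⟩
  have hm1 : 1 ≤ m := by omega
  -- positivity facts
  have ha : (0:ℝ) < 2*((m+k : ℕ):ℝ)+1 := by positivity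
  have hb : (0:ℝ) < ((2*m : ℕ):ℝ) := by
    have : (0:ℕ) < 2*m := by omega
    exact_mod_cast this
  have hc : (0:ℝ) < 2*((m+k : ℕ):ℝ) - ((2*m : ℕ):ℝ) + 1 := by
    push_cast; linarith [Nat.cast_nonneg (α := ℝ) k]
  set T : ℝ := 2 * (2 * ((m+k : ℕ) : ℝ) + 1) ^ ((1 : ℝ) / 4) /
      (((2*m : ℕ) : ℝ) ^ ((1 : ℝ) / 2) * (2 * ((m+k : ℕ) : ℝ) - ((2*m : ℕ) : ℝ) + 1) ^ ((1 : ℝ) / 4))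
      with hT
  have hTpos : 0 < T := by
    rw [hT]; positivity
  have hT2 : T^2 = 4 * Real.sqrt (2*((m+k : ℕ):ℝ)+1) /
      (((2*m : ℕ):ℝ) * Real.sqrt (2*((m+k : ℕ):ℝ) - ((2*m : ℕ):ℝ) + 1)) := by
    rw [hT, div_pow, mul_pow, mul_pow, quarter_sq ha.le, quarter_sq hc.le, half_sq hb.le]
    norm_num
  -- key step: bound the square
  have hsq : (CG0 (m+k) (2*m) (m+k))^2 ≤ T^2 := by
    rw [hT2, cg0_sq m k]
    have harg : 2*((m+k : ℕ):ℝ) - ((2*m : ℕ):ℝ) + 1 = 2*(k:ℝ)+1 := by push_cast; ring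
    rw [harg]
    have hd1 : (0:ℝ) < (4*(m:ℝ)+2*(k:ℝ)+1) * (centralBinom (2*m+k) : ℝ) := by
      have := centralBinom_pos (2*m+k)
      have : (0:ℝ) < (centralBinom (2*m+k) : ℝ) := by exact_mod_cast this
      positivity
    have hd2 : (0:ℝ) < ((2*m : ℕ):ℝ) * Real.sqrt (2*(k:ℝ)+1) := by positivity
    rw [div_le_div_iff₀ hd1 hd2]
    push_cast
    -- abbreviations
    set Bm := (centralBinom m : ℝ) with hBm
    set Bk := (centralBinom k : ℝ) with hBk
    set BM := (centralBinom (2*m+k) : ℝ) with hBM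
    have hBm0 : 0 ≤ Bm := by positivity
    have hBk0 : 0 ≤ Bk := by positivity
    have hBM0 : 0 ≤ BM := by
      have := centralBinom_pos (2*m+k)
      rw [hBM]; positivity
    set sk := Real.sqrt (2*(k:ℝ)+1) with hsk
    set sA := Real.sqrt (2*((m:ℝ)+(k:ℝ))+1) with hsA
    set sM := Real.sqrt ((2*m+k : ℕ) : ℝ) with hsM
    have hsk0 : 0 ≤ sk := Real.sqrt_nonneg _
    have hsA0 : 0 ≤ sA := Real.sqrt_nonneg _
    have hsM0 : 0 ≤ sM := Real.sqrt_nonneg _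
    -- the three central binomial estimates
    have hm_up : Bm^2*(2*(m:ℝ)+1) ≤ 16^m := by
      have h := (Nat.cast_le (α := ℝ)).2 (cb_upper m)
      push_cast at h
      calc Bm^2*(2*(m:ℝ)+1) ≤ (4:ℝ)^(2*m) := by rw [hBm]; nlinarith [h]
        _ = (16:ℝ)^m := by rw [pow_mul]; norm_num
    have hk_up : Bk*sk ≤ (4:ℝ)^k := by
      have := cb_upper_real k
      rw [hBk, hsk]; exact_mod_cast this
    have hM_low : (4:ℝ)^(2*m+k) ≤ 2*sM*BM := by
      have := cb_lower_real (2*m+k) (by omega)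
      rw [hsM, hBM]; exact_mod_cast this
    have hsMA : sM ≤ sA := by
      rw [hsM, hsA]
      apply Real.sqrt_le_sqrt
      push_cast; linarith
    -- main chain
    calc (2*((m:ℝ)+(k:ℝ))+1) * Bm^2 * Bk * (2*(m:ℝ)*sk)
        ≤ (2*((m:ℝ)+(k:ℝ))+1) * Bm^2 * Bk * ((2*(m:ℝ)+1)*sk) := by
          gcongr
          all_goals linarith
      _ = (2*((m:ℝ)+(k:ℝ))+1) * ((Bm^2*(2*(m:ℝ)+1)) * (Bk*sk)) := by ring
      _ ≤ (2*((m:ℝ)+(k:ℝ))+1) * ((16:ℝ)^m * (4:ℝ)^k) := by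
          gcongr <;> first | positivity | skip
          all_goals assumption
      _ = (2*((m:ℝ)+(k:ℝ))+1) * (4:ℝ)^(2*m+k) := by
          rw [pow_add, pow_mul]; norm_num
      _ ≤ (2*((m:ℝ)+(k:ℝ))+1) * (2*sM*BM) :=
          mul_le_mul_of_nonneg_left hM_low (by positivity)
      _ ≤ 4*sA*((4*(m:ℝ)+2*(k:ℝ)+1) * BM) := by
          have h1 : (2*((m:ℝ)+(k:ℝ))+1) ≤ 4*(m:ℝ)+2*(k:ℝ)+1 := by
            have : (0:ℝ) ≤ (m:ℝ) := Nat.cast_nonneg m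
            linarith
          have h2 : (2*((m:ℝ)+(k:ℝ))+1) * sM ≤ (4*(m:ℝ)+2*(k:ℝ)+1) * sA := by
            apply mul_le_mul h1 hsMA hsM0
            positivity
          nlinarith [mul_le_mul_of_nonneg_right h2 hBM0, mul_nonneg (mul_nonneg (by positivity : (0:ℝ) ≤ (4*(m:ℝ)+2*(k:ℝ)+1)) hsA0) hBM0]
  have h := Real.sqrt_le_sqrt hsq
  rwa [Real.sqrt_sq_eq_abs, Real.sqrt_sq hTpos.le] at h


end
end

section
/- Let α ≥ 0 and let {C_l : l ∈ ℕ} be positive reals for which there are constants a, b > 0 with a (l+1)^α e^{−l} ≤ C_l ≤ b (l+1)^α e^{−l} for all l, and set Γ_l = (2l+1) C_l. Then there exist a constant c > 0 and an integer l₀ such that for all l ≥ l₀, Σ_{l₁, l₂ ≥ 0} Γ_{l₁} Γ_{l₂} C(l₁, l₂, l)² ≥ c · e^{−l} · l^{2(α+1) + 1/2}. -/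
open scoped BigOperators


open Nat in
lemma cb_sq_upper : ∀ n : ℕ, (centralBinom n)^2 * (3*n+1) ≤ 16 ^ n
  | 0 => by simp [Nat.centralBinom]
  | (n+1) => by
      have ih := cb_sq_upper n
      have key := Nat.succ_mul_centralBinom_succ n
      set c := Nat.centralBinom n with hc
      set d := Nat.centralBinom (n+1) with hd
      have key2 : (n+1)^2 * d^2 = 4 * (2*n+1)^2 * c^2 := by
        have := congrArg (fun x => x * x) key; ring_nf at this ⊢; nlinarith [this]
      have step1 : d^2 * (3*(n+1)+1) * ((n+1)^2 * (3*n+1)) =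
          4*(2*n+1)^2*(3*n+4) * (c^2 * (3*n+1)) := by ring_nf; nlinarith [key2]
      have step2 : 4*(2*n+1)^2*(3*n+4) * (c^2 * (3*n+1)) ≤ 4*(2*n+1)^2*(3*n+4) * 16^n :=
        Nat.mul_le_mul_left _ ih
      have step3 : 4*(2*n+1)^2*(3*n+4) * 16^n ≤ 16^(n+1) * ((n+1)^2 * (3*n+1)) := by
        have h : 4*(2*n+1)^2*(3*n+4) ≤ 16 * ((n+1)^2*(3*n+1)) := by nlinarith
        calc 4*(2*n+1)^2*(3*n+4) * 16^n ≤ 16 * ((n+1)^2*(3*n+1)) * 16^n :=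
              Nat.mul_le_mul_right _ h
          _ = 16^(n+1) * ((n+1)^2 * (3*n+1)) := by ring
      have : d^2 * (3*(n+1)+1) * ((n+1)^2 * (3*n+1)) ≤ 16^(n+1) * ((n+1)^2 * (3*n+1)) := by
        rw [step1]; exact le_trans step2 step3
      exact Nat.le_of_mul_le_mul_right this (by positivity)

open Nat in
lemma cb_sq_lower : ∀ n : ℕ, 1 ≤ n → 16 ^ n ≤ (centralBinom n)^2 * (4*n)
  | 0, h => by omega
  | 1, _ => by simp [Nat.centralBinom]
  | (n+2), _ => by
      have ih := cb_sq_lower (n+1) (by omega)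
      have key := Nat.succ_mul_centralBinom_succ (n+1)
      set c := Nat.centralBinom (n+1) with hc
      set d := Nat.centralBinom (n+2) with hd
      have key2 : (n+2)^2 * d^2 = 4 * (2*n+3)^2 * c^2 := by
        have := congrArg (fun x => x * x) key; ring_nf at this ⊢; nlinarith [this]
      have main : 16^(n+2) * (n+2)^2 ≤ (d^2 * (4*(n+2))) * (n+2)^2 := by
        calc 16^(n+2) * (n+2)^2 = 16*(n+2)^2*16^(n+1) := by ring
          _ ≤ 16*(n+2)^2*(c^2*(4*(n+1))) := Nat.mul_le_mul_left _ ih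
          _ ≤ 4*(n+2)*(4 * (2*n+3)^2 * c^2) := by nlinarith [sq_nonneg c, Nat.zero_le (c^2)]
          _ = 4*(n+2)*((n+2)^2*d^2) := by rw [key2]
          _ = (d^2 * (4*(n+2))) * (n+2)^2 := by ring
      exact Nat.le_of_mul_le_mul_right main (by positivity)

lemma cb_le_four_pow (n : ℕ) : Nat.centralBinom n ≤ 4 ^ n := by
  have h := cb_sq_upper n
  have h2 : (Nat.centralBinom n)^2 ≤ (4^n)^2 := by
    calc (Nat.centralBinom n)^2 ≤ (Nat.centralBinom n)^2 * (3*n+1) := by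
          exact Nat.le_mul_of_pos_right _ (by omega)
      _ ≤ 16^n := h
      _ = (4^n)^2 := by rw [← pow_mul, Nat.mul_comm n 2, pow_mul]; norm_num
  exact le_of_pow_le_pow_left₀ (by norm_num) (by positivity) h2

lemma four_pow_le_cb (n : ℕ) : 4 ^ n ≤ (2*n+1) * Nat.centralBinom n := by
  rcases Nat.eq_zero_or_pos n with rfl | hn
  · simp [Nat.centralBinom]
  · have h := cb_sq_lower n hn
    have h2 : (4^n)^2 ≤ ((2*n+1) * Nat.centralBinom n)^2 := by
      calc (4^n)^2 = 16^n := by rw [← pow_mul, Nat.mul_comm n 2, pow_mul]; norm_num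
        _ ≤ (Nat.centralBinom n)^2 * (4*n) := h
        _ ≤ (Nat.centralBinom n)^2 * (2*n+1)^2 := by
            exact Nat.mul_le_mul_left _ (by nlinarith)
        _ = ((2*n+1) * Nat.centralBinom n)^2 := by ring
    exact le_of_pow_le_pow_left₀ (by norm_num) (by positivity) h2

lemma two_mul_factorial (n : ℕ) : (2*n).factorial = Nat.centralBinom n * n.factorial * n.factorial := by
  rw [Nat.centralBinom_eq_two_mul_choose]
  have := Nat.choose_mul_factorial_mul_factorial (show n ≤ 2*n by omega)
  rw [show 2*n - n = n by omega] at this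
  omega

lemma fact_ineq {x y z j : ℕ} (h : x + y + z = j) :
    j.factorial^2 * ((2*x).factorial * (2*y).factorial * (2*z).factorial) ≤
      (x.factorial * y.factorial * z.factorial)^2 * (2*j+1).factorial := by
  have hx := two_mul_factorial x
  have hy := two_mul_factorial y
  have hz := two_mul_factorial z
  have hj : (2*j+1).factorial = (2*j+1) * (Nat.centralBinom j * j.factorial * j.factorial) := by
    rw [← two_mul_factorial j, Nat.factorial_succ]
  have hcb : Nat.centralBinom x * Nat.centralBinom y * Nat.centralBinom z ≤ (2*j+1) * Nat.centralBinom j := by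
    calc Nat.centralBinom x * Nat.centralBinom y * Nat.centralBinom z
        ≤ 4^x * 4^y * 4^z := by
          exact Nat.mul_le_mul (Nat.mul_le_mul (cb_le_four_pow x) (cb_le_four_pow y)) (cb_le_four_pow z)
      _ = 4^j := by rw [← pow_add, ← pow_add, h]
      _ ≤ (2*j+1) * Nat.centralBinom j := four_pow_le_cb j
  calc j.factorial^2 * ((2*x).factorial * (2*y).factorial * (2*z).factorial)
      = (Nat.centralBinom x * Nat.centralBinom y * Nat.centralBinom z) *
          (j.factorial^2 * (x.factorial * y.factorial * z.factorial)^2) := by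
        rw [hx, hy, hz]; ring
    _ ≤ ((2*j+1) * Nat.centralBinom j) * (j.factorial^2 * (x.factorial * y.factorial * z.factorial)^2) :=
        Nat.mul_le_mul_right _ hcb
    _ = (x.factorial * y.factorial * z.factorial)^2 * (2*j+1).factorial := by
        rw [hj]; ring



lemma cb_real_lower {n : ℕ} (hn : 1 ≤ n) :
    (4:ℝ)^n ≤ (Nat.centralBinom n : ℝ) * Real.sqrt (4*n) := by
  have h := cb_sq_lower n hn
  have h' : ((4:ℝ)^n)^2 ≤ ((Nat.centralBinom n : ℝ) * Real.sqrt (4*n))^2 := by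
    rw [mul_pow, Real.sq_sqrt (by positivity)]
    calc ((4:ℝ)^n)^2 = (16:ℝ)^n := by rw [← pow_mul, Nat.mul_comm n 2, pow_mul]; norm_num
      _ ≤ (Nat.centralBinom n : ℝ)^2 * (4*n) := by exact_mod_cast h
  have h1 : (0:ℝ) ≤ (Nat.centralBinom n : ℝ) * Real.sqrt (4*n) := by positivity
  nlinarith [pow_pos (show (0:ℝ) < 4 by norm_num) n]

lemma cb_real_upper (n : ℕ) :
    (Nat.centralBinom n : ℝ) * Real.sqrt (3*n+1) ≤ (4:ℝ)^n := by
  have h := cb_sq_upper n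
  have h' : ((Nat.centralBinom n : ℝ) * Real.sqrt (3*n+1))^2 ≤ ((4:ℝ)^n)^2 := by
    rw [mul_pow, Real.sq_sqrt (by positivity)]
    calc (Nat.centralBinom n : ℝ)^2 * (3*n+1) ≤ ((16:ℝ))^n := by exact_mod_cast h
      _ = ((4:ℝ)^n)^2 := by rw [← pow_mul, Nat.mul_comm n 2, pow_mul]; norm_num
  have h1 : (0:ℝ) ≤ (Nat.centralBinom n : ℝ) * Real.sqrt (3*n+1) := by positivity
  nlinarith [pow_pos (show (0:ℝ) < 4 by norm_num) n]


lemma summable_poly_exp (β : ℝ) :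
    Summable (fun n : ℕ => ((n:ℝ)+1)^β * Real.exp (-(n:ℝ))) := by
  set k := ⌈β⌉₊ with hk
  have hr : ‖Real.exp (-1:ℝ)‖ < 1 := by
    rw [Real.norm_eq_abs, abs_of_pos (Real.exp_pos _)]
    exact Real.exp_lt_one_iff.mpr (by norm_num)
  have h1 : Summable (fun n : ℕ => (n:ℝ)^k * Real.exp (-1:ℝ)^n) :=
    summable_pow_mul_geometric_of_norm_lt_one k hr
  have h2 : Summable (fun n : ℕ => (((n+1):ℕ):ℝ)^k * Real.exp (-1:ℝ)^(n+1)) :=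
    (summable_nat_add_iff 1).mpr h1
  have h3 := h2.mul_left (Real.exp 1)
  apply h3.of_nonneg_of_le
  · intro n; positivity
  · intro n
    have hexp : Real.exp (-(n:ℝ)) = Real.exp (-1:ℝ)^n := by
      rw [← Real.exp_nat_mul]; norm_num
    have hb : ((n:ℝ)+1)^β ≤ ((n:ℝ)+1)^(k:ℝ) :=
      Real.rpow_le_rpow_of_exponent_le (by exact_mod_cast Nat.le_add_left 1 n) (Nat.le_ceil β)
    have h4 : Real.exp 1 * Real.exp (-1:ℝ) = 1 := by rw [← Real.exp_add]; norm_num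
    calc ((n:ℝ)+1)^β * Real.exp (-(n:ℝ))
        ≤ ((n:ℝ)+1)^(k:ℝ) * Real.exp (-(n:ℝ)) :=
          mul_le_mul_of_nonneg_right hb (Real.exp_nonneg _)
      _ = Real.exp 1 * ((((n+1):ℕ):ℝ)^k * Real.exp (-1:ℝ)^(n+1)) := by
          rw [Real.rpow_natCast, hexp]
          push_cast
          rw [pow_succ]
          linear_combination (-(((n:ℝ)+1)^k * Real.exp (-1:ℝ)^n)) * h4

noncomputable section


lemma CG0_sq_eq (l₁ l₂ l₃ j x y z : ℕ)
    (hj : l₁ + l₂ + l₃ = 2*j) (hx : l₁ + l₂ = l₃ + 2*x) (hy : l₁ + l₃ = l₂ + 2*y)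
    (hz : l₂ + l₃ = l₁ + 2*z) :
    CG0 l₁ l₂ l₃ ^ 2 = (2*(l₃:ℝ)+1) *
      ((j.factorial:ℝ)^2 * ((2*x).factorial * (2*y).factorial * (2*z).factorial)) /
      (((x.factorial : ℝ) * y.factorial * z.factorial)^2 * ((2*j+1).factorial)) := by
  have hcond : Even (l₁ + l₂ + l₃) ∧ l₃ ≤ l₁ + l₂ ∧ l₁ ≤ l₂ + l₃ ∧ l₂ ≤ l₁ + l₃ :=
    ⟨⟨j, by omega⟩, by omega, by omega, by omega⟩
  rw [CG0, if_pos hcond]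
  have e1 : (l₁ + l₂ + l₃) / 2 = j := by omega
  have e2 : j - l₃ = x := by omega
  have e3 : j - l₂ = y := by omega
  have e4 : j - l₁ = z := by omega
  have e5 : l₁ + l₂ - l₃ = 2*x := by omega
  have e6 : l₁ + l₃ - l₂ = 2*y := by omega
  have e7 : l₂ + l₃ - l₁ = 2*z := by omega
  have e8 : l₁ + l₂ + l₃ + 1 = 2*j+1 := by omega
  rw [e1, e2, e3, e4, e5, e6, e7, e8]
  rw [mul_pow, div_pow, mul_pow, mul_pow]
  rw [Real.sq_sqrt (by positivity), Real.sq_sqrt (by positivity)]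
  rw [show ((-1:ℝ)^x)^2 = 1 by rw [← pow_mul, mul_comm, pow_mul]; norm_num]
  have f1 : (0:ℝ) < (x.factorial : ℝ) := by exact_mod_cast x.factorial_pos
  have f2 : (0:ℝ) < (y.factorial : ℝ) := by exact_mod_cast y.factorial_pos
  have f3 : (0:ℝ) < (z.factorial : ℝ) := by exact_mod_cast z.factorial_pos
  have f4 : (0:ℝ) < ((2*j+1).factorial : ℝ) := by exact_mod_cast (2*j+1).factorial_pos
  field_simp

lemma CG0_sq_le (l₁ l₂ l₃ : ℕ) : CG0 l₁ l₂ l₃ ^ 2 ≤ 2*(l₃:ℝ)+1 := by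
  by_cases h : Even (l₁ + l₂ + l₃) ∧ l₃ ≤ l₁ + l₂ ∧ l₁ ≤ l₂ + l₃ ∧ l₂ ≤ l₁ + l₃
  · obtain ⟨⟨m, hm⟩, h1, h2, h3⟩ := h
    obtain ⟨j, hj⟩ : ∃ j, l₁ + l₂ + l₃ = 2*j := ⟨m, by omega⟩
    obtain ⟨x, hx⟩ : ∃ x, l₁ + l₂ = l₃ + 2*x := ⟨(l₁+l₂-l₃)/2, by omega⟩
    obtain ⟨y, hy⟩ : ∃ y, l₁ + l₃ = l₂ + 2*y := ⟨(l₁+l₃-l₂)/2, by omega⟩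
    obtain ⟨z, hz⟩ : ∃ z, l₂ + l₃ = l₁ + 2*z := ⟨(l₂+l₃-l₁)/2, by omega⟩
    rw [CG0_sq_eq l₁ l₂ l₃ j x y z hj hx hy hz]
    have hsum : x + y + z = j := by omega
    have key := fact_ineq hsum
    have keyR : (j.factorial:ℝ)^2 * ((2*x).factorial * (2*y).factorial * (2*z).factorial) ≤
        ((x.factorial : ℝ) * y.factorial * z.factorial)^2 * ((2*j+1).factorial) := by
      exact_mod_cast key
    have hD : (0:ℝ) < ((x.factorial : ℝ) * y.factorial * z.factorial)^2 * ((2*j+1).factorial) := by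
      have f1 : (0:ℝ) < (x.factorial : ℝ) := by exact_mod_cast x.factorial_pos
      have f2 : (0:ℝ) < (y.factorial : ℝ) := by exact_mod_cast y.factorial_pos
      have f3 : (0:ℝ) < (z.factorial : ℝ) := by exact_mod_cast z.factorial_pos
      have f4 : (0:ℝ) < ((2*j+1).factorial : ℝ) := by exact_mod_cast (2*j+1).factorial_pos
      positivity
    rw [mul_div_assoc]
    calc (2*(l₃:ℝ)+1) * (((j.factorial:ℝ)^2 * ((2*x).factorial * (2*y).factorial * (2*z).factorial)) /
          (((x.factorial : ℝ) * y.factorial * z.factorial)^2 * ((2*j+1).factorial)))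
        ≤ (2*(l₃:ℝ)+1) * 1 :=
          mul_le_mul_of_nonneg_left (by rw [div_le_one hD]; exact keyR) (by positivity)
      _ = 2*(l₃:ℝ)+1 := by ring
  · rw [CG0, if_neg h]; norm_num; positivity

lemma CG0_diag_sq (l₁ l₂ : ℕ) :
    CG0 l₁ l₂ (l₁+l₂) ^ 2 =
      (Nat.centralBinom l₁ * Nat.centralBinom l₂ : ℝ) / (Nat.centralBinom (l₁+l₂)) := by
  rw [CG0_sq_eq l₁ l₂ (l₁+l₂) (l₁+l₂) 0 l₁ l₂ (by ring) (by ring) (by ring) (by ring)]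
  have e1 : ((2*l₁).factorial : ℝ) = Nat.centralBinom l₁ * l₁.factorial * l₁.factorial := by
    exact_mod_cast congrArg (Nat.cast (R := ℝ)) (two_mul_factorial l₁)
  have e2 : ((2*l₂).factorial : ℝ) = Nat.centralBinom l₂ * l₂.factorial * l₂.factorial := by
    exact_mod_cast congrArg (Nat.cast (R := ℝ)) (two_mul_factorial l₂)
  have e3 : ((2*(l₁+l₂)+1).factorial : ℝ) =
      (2*(l₁+l₂)+1) * (Nat.centralBinom (l₁+l₂) * (l₁+l₂).factorial * (l₁+l₂).factorial) := by
    rw [Nat.factorial_succ, two_mul_factorial]; push_cast; ring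
  rw [e1, e2, e3]
  have f1 : (0:ℝ) < (l₁.factorial : ℝ) := by exact_mod_cast l₁.factorial_pos
  have f2 : (0:ℝ) < (l₂.factorial : ℝ) := by exact_mod_cast l₂.factorial_pos
  have f3 : (0:ℝ) < ((l₁+l₂).factorial : ℝ) := by exact_mod_cast (l₁+l₂).factorial_pos
  have f4 : (0:ℝ) < (Nat.centralBinom (l₁+l₂) : ℝ) := by exact_mod_cast (l₁+l₂).centralBinom_pos
  have f5 : (0:ℝ) < 2*((l₁:ℝ)+(l₂:ℝ))+1 := by positivity
  rw [Nat.factorial_zero]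
  push_cast
  field_simp

lemma CG0_eq_zero_of (l₁ l₂ l₃ : ℕ) (h : l₁ + l₃ < l₂) : CG0 l₁ l₂ l₃ = 0 := by
  rw [CG0, if_neg]; rintro ⟨-, -, -, h'⟩; omega


set_option maxHeartbeats 1000000 in
/-- If `C_l ≍ (l+1)^α e^{−l}`, then for all large `l`,
`Σ_{l₁,l₂} Γ_{l₁} Γ_{l₂} C(l₁,l₂,l)² ≥ c e^{−l} l^{2(α+1)+1/2}` with `Γ_l = (2l+1)C_l`. -/
theorem exponential_spectrum_denominator_lower_bound
    (α : ℝ) (hα : 0 ≤ α) (C : ℕ → ℝ) (hCpos : ∀ l, 0 < C l)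
    (a b : ℝ) (ha : 0 < a) (hb : 0 < b)
    (hlow : ∀ l : ℕ, a * ((l : ℝ) + 1) ^ α * Real.exp (-(l : ℝ)) ≤ C l)
    (hupp : ∀ l : ℕ, C l ≤ b * ((l : ℝ) + 1) ^ α * Real.exp (-(l : ℝ)))
    (Γ : ℕ → ℝ) (hΓ : ∀ l, Γ l = (2 * (l : ℝ) + 1) * C l) :
    ∃ c : ℝ, 0 < c ∧ ∃ l₀ : ℕ, ∀ l : ℕ, l₀ ≤ l →
      c * Real.exp (-(l : ℝ)) * (l : ℝ) ^ (2 * (α + 1) + 1 / 2) ≤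
        ∑' l₁ : ℕ, ∑' l₂ : ℕ, Γ l₁ * Γ l₂ * CG0 l₁ l₂ l ^ 2 := by
  have h8 : (0:ℝ) < (8:ℝ)^α := Real.rpow_pos_of_pos (by norm_num) α
  refine ⟨a^2 / (512 * (8:ℝ)^α * (8:ℝ)^α), by positivity, 8, ?_⟩
  intro l hl
  have hΓpos : ∀ m, 0 < Γ m := fun m => by
    rw [hΓ]; exact mul_pos (by positivity) (hCpos m)
  have hterm_nonneg : ∀ l₁ l₂ : ℕ, 0 ≤ Γ l₁ * Γ l₂ * CG0 l₁ l₂ l ^ 2 := fun l₁ l₂ =>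
    mul_nonneg (mul_nonneg (hΓpos l₁).le (hΓpos l₂).le) (sq_nonneg _)
  -- inner summability
  have hvanish : ∀ l₁ : ℕ, ∀ l₂ ∉ Finset.range (l₁ + l + 1),
      Γ l₁ * Γ l₂ * CG0 l₁ l₂ l ^ 2 = 0 := by
    intro l₁ l₂ hl₂
    rw [Finset.mem_range, not_lt] at hl₂
    rw [CG0_eq_zero_of l₁ l₂ l (by omega)]
    ring
  have hinner : ∀ l₁, Summable (fun l₂ => Γ l₁ * Γ l₂ * CG0 l₁ l₂ l ^ 2) := fun l₁ =>
    summable_of_ne_finset_zero (hvanish l₁)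
  -- Γ upper bound
  have hΓupp : ∀ m : ℕ, Γ m ≤ 2*b*(((m:ℝ)+1)^(α+1) * Real.exp (-(m:ℝ))) := by
    intro m
    rw [hΓ, Real.rpow_add_one (by positivity : ((m:ℝ)+1) ≠ 0)]
    calc (2*(m:ℝ)+1) * C m ≤ (2*(m:ℝ)+2) * (b * ((m:ℝ)+1)^α * Real.exp (-(m:ℝ))) := by
          apply mul_le_mul (by linarith) (hupp m) (hCpos m).le (by positivity)
      _ = 2*b*(((m:ℝ)+1)^α * ((m:ℝ)+1) * Real.exp (-(m:ℝ))) := by ring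
  have hh := summable_poly_exp (α+1)
  set S := ∑' n:ℕ, ((n:ℝ)+1)^(α+1) * Real.exp (-(n:ℝ)) with hSdef
  have hSnn : 0 ≤ S := tsum_nonneg (fun n => by positivity)
  -- outer summability
  have houter : Summable (fun l₁ => ∑' l₂, Γ l₁ * Γ l₂ * CG0 l₁ l₂ l ^ 2) := by
    apply Summable.of_nonneg_of_le
      (f := fun l₁ : ℕ => ((2*b)*(2*(l:ℝ)+1)*((2*b)*S)) * (((l₁:ℝ)+1)^(α+1) * Real.exp (-(l₁:ℝ))))
      (fun l₁ => tsum_nonneg (fun l₂ => hterm_nonneg l₁ l₂))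
    · intro l₁
      rw [tsum_eq_sum (hvanish l₁)]
      have step : ∀ l₂ ∈ Finset.range (l₁ + l + 1),
          Γ l₁ * Γ l₂ * CG0 l₁ l₂ l ^ 2 ≤
            (Γ l₁ * (2*(l:ℝ)+1) * (2*b)) * (((l₂:ℝ)+1)^(α+1) * Real.exp (-(l₂:ℝ))) := by
        intro l₂ _
        calc Γ l₁ * Γ l₂ * CG0 l₁ l₂ l ^ 2
            ≤ Γ l₁ * (2*b*(((l₂:ℝ)+1)^(α+1) * Real.exp (-(l₂:ℝ)))) * (2*(l:ℝ)+1) := by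
              apply mul_le_mul
              · exact mul_le_mul_of_nonneg_left (hΓupp l₂) (hΓpos l₁).le
              · exact CG0_sq_le l₁ l₂ l
              · exact sq_nonneg _
              · exact mul_nonneg (hΓpos l₁).le (by positivity)
          _ = (Γ l₁ * (2*(l:ℝ)+1) * (2*b)) * (((l₂:ℝ)+1)^(α+1) * Real.exp (-(l₂:ℝ))) := by
              ring
      calc ∑ l₂ ∈ Finset.range (l₁ + l + 1), Γ l₁ * Γ l₂ * CG0 l₁ l₂ l ^ 2
          ≤ ∑ l₂ ∈ Finset.range (l₁ + l + 1),
              (Γ l₁ * (2*(l:ℝ)+1) * (2*b)) * (((l₂:ℝ)+1)^(α+1) * Real.exp (-(l₂:ℝ))) :=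
            Finset.sum_le_sum step
        _ = (Γ l₁ * (2*(l:ℝ)+1) * (2*b)) *
              ∑ l₂ ∈ Finset.range (l₁ + l + 1), (((l₂:ℝ)+1)^(α+1) * Real.exp (-(l₂:ℝ))) := by
            rw [Finset.mul_sum]
        _ ≤ (Γ l₁ * (2*(l:ℝ)+1) * (2*b)) * S := by
            apply mul_le_mul_of_nonneg_left _
              (mul_nonneg (mul_nonneg (hΓpos l₁).le (by positivity)) (by positivity))
            exact Summable.sum_le_tsum _ (fun n _ => by positivity) hh
        _ ≤ ((2*b*(((l₁:ℝ)+1)^(α+1) * Real.exp (-(l₁:ℝ)))) * (2*(l:ℝ)+1) * (2*b)) * S := by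
            apply mul_le_mul_of_nonneg_right _ hSnn
            apply mul_le_mul_of_nonneg_right _ (by positivity)
            exact mul_le_mul_of_nonneg_right (hΓupp l₁) (by positivity)
        _ = ((2*b)*(2*(l:ℝ)+1)*((2*b)*S)) * (((l₁:ℝ)+1)^(α+1) * Real.exp (-(l₁:ℝ))) := by
            ring
    · exact hh.mul_left _
  -- choose the window
  set T := Finset.Icc (l/4) (l/2) with hT
  have hl8 : (8:ℕ) ≤ l := hl
  have hl0 : (0:ℝ) < (l:ℝ) := by
    have h0l : 0 < l := by omega
    exact_mod_cast h0l
  -- per-term lower bound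
  set Q := a^2 * (((l:ℝ)/8)^α)^2 * (((l:ℝ)/4))^2 * (Real.sqrt l / (4*(l:ℝ))) * Real.exp (-(l:ℝ))
    with hQ
  have hQnn : 0 ≤ Q := by positivity
  have key3 : ∀ l₁ ∈ T, Q ≤ Γ l₁ * Γ (l - l₁) * CG0 l₁ (l - l₁) l ^ 2 := by
    intro l₁ hl₁
    rw [hT, Finset.mem_Icc] at hl₁
    obtain ⟨h14, h12⟩ := hl₁
    obtain ⟨l₂, hsum12⟩ : ∃ m, l₁ + m = l := ⟨l - l₁, by omega⟩
    rw [show l - l₁ = l₂ by omega]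
    have hn1 : l ≤ 8 * l₁ := by omega
    have hn2 : l ≤ 8 * l₂ := by omega
    have h1l : 1 ≤ l₁ := by omega
    have h2l : 1 ≤ l₂ := by omega
    have hA : (l:ℝ)/8 ≤ (l₁:ℝ) := by
      rw [div_le_iff₀ (by norm_num)]
      exact_mod_cast by linarith [show ((l:ℝ)) ≤ ((8*l₁ : ℕ):ℝ) from by exact_mod_cast hn1]
    have hB : (l:ℝ)/8 ≤ (l₂:ℝ) := by
      rw [div_le_iff₀ (by norm_num)]
      exact_mod_cast by linarith [show ((l:ℝ)) ≤ ((8*l₂ : ℕ):ℝ) from by exact_mod_cast hn2]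
    have hl₁l : (l₁:ℝ) ≤ (l:ℝ) := by exact_mod_cast Nat.le_of_lt_succ (by omega)
    have hl₂l : (l₂:ℝ) ≤ (l:ℝ) := by exact_mod_cast Nat.le_of_lt_succ (by omega)
    -- CG0 lower bound
    have hdiag : CG0 l₁ l₂ l ^ 2 =
        (Nat.centralBinom l₁ * Nat.centralBinom l₂ : ℝ) / (Nat.centralBinom l) := by
      have := CG0_diag_sq l₁ l₂
      rwa [hsum12] at this
    have hcbl : (0:ℝ) < (Nat.centralBinom l : ℝ) := by exact_mod_cast l.centralBinom_pos
    have hcb1 : (0:ℝ) < (Nat.centralBinom l₁ : ℝ) := by exact_mod_cast l₁.centralBinom_pos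
    have hcb2 : (0:ℝ) < (Nat.centralBinom l₂ : ℝ) := by exact_mod_cast l₂.centralBinom_pos
    have s1 : Real.sqrt (4*(l₁:ℝ)) * Real.sqrt (4*(l₂:ℝ)) ≤ 4*(l:ℝ) := by
      rw [← Real.sqrt_mul (by positivity)]
      calc Real.sqrt ((4*(l₁:ℝ)) * (4*(l₂:ℝ))) ≤ Real.sqrt ((4*(l:ℝ))^2) := by
            apply Real.sqrt_le_sqrt; nlinarith
        _ = 4*(l:ℝ) := Real.sqrt_sq (by positivity)
    have s2 : Real.sqrt (l:ℝ) ≤ Real.sqrt (3*(l:ℝ)+1) := Real.sqrt_le_sqrt (by linarith)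
    have e4l : (4:ℝ)^l = 4^l₁ * 4^l₂ := by rw [← pow_add, hsum12]
    have G : (Nat.centralBinom l : ℝ) * Real.sqrt (l:ℝ) ≤
        ((Nat.centralBinom l₁ : ℝ) * Nat.centralBinom l₂) * (4*(l:ℝ)) := by
      calc (Nat.centralBinom l : ℝ) * Real.sqrt (l:ℝ)
          ≤ (Nat.centralBinom l : ℝ) * Real.sqrt (3*(l:ℝ)+1) :=
            mul_le_mul_of_nonneg_left s2 hcbl.le
        _ ≤ (4:ℝ)^l := by
            have := cb_real_upper l; push_cast at this ⊢; linarith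
        _ = 4^l₁ * 4^l₂ := e4l
        _ ≤ ((Nat.centralBinom l₁ : ℝ) * Real.sqrt (4*(l₁:ℝ))) *
              ((Nat.centralBinom l₂ : ℝ) * Real.sqrt (4*(l₂:ℝ))) := by
            have c1 := cb_real_lower h1l; have c2 := cb_real_lower h2l
            push_cast at c1 c2
            exact mul_le_mul c1 c2 (by positivity) (by positivity)
        _ = ((Nat.centralBinom l₁ : ℝ) * Nat.centralBinom l₂) *
              (Real.sqrt (4*(l₁:ℝ)) * Real.sqrt (4*(l₂:ℝ))) := by ring
        _ ≤ ((Nat.centralBinom l₁ : ℝ) * Nat.centralBinom l₂) * (4*(l:ℝ)) :=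
            mul_le_mul_of_nonneg_left s1 (by positivity)
    have hCG : Real.sqrt (l:ℝ) / (4*(l:ℝ)) ≤ CG0 l₁ l₂ l ^ 2 := by
      rw [hdiag, div_le_div_iff₀ (by positivity) hcbl]
      nlinarith [G]
    -- Γ lower bounds
    have g1 : a * ((l:ℝ)/8)^α * ((l:ℝ)/4) * Real.exp (-(l₁:ℝ)) ≤ Γ l₁ := by
      rw [hΓ]
      calc a * ((l:ℝ)/8)^α * ((l:ℝ)/4) * Real.exp (-(l₁:ℝ))
          ≤ a * ((l₁:ℝ)+1)^α * (2*(l₁:ℝ)+1) * Real.exp (-(l₁:ℝ)) := by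
            apply mul_le_mul_of_nonneg_right _ (Real.exp_nonneg _)
            apply mul_le_mul (mul_le_mul_of_nonneg_left
              (Real.rpow_le_rpow (by positivity) (by linarith) hα) ha.le)
              (by linarith) (by positivity) (by positivity)
        _ = (2*(l₁:ℝ)+1) * (a * ((l₁:ℝ)+1)^α * Real.exp (-(l₁:ℝ))) := by ring
        _ ≤ (2*(l₁:ℝ)+1) * C l₁ := mul_le_mul_of_nonneg_left (hlow l₁) (by positivity)
    have g2 : a * ((l:ℝ)/8)^α * ((l:ℝ)/4) * Real.exp (-(l₂:ℝ)) ≤ Γ l₂ := by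
      rw [hΓ]
      calc a * ((l:ℝ)/8)^α * ((l:ℝ)/4) * Real.exp (-(l₂:ℝ))
          ≤ a * ((l₂:ℝ)+1)^α * (2*(l₂:ℝ)+1) * Real.exp (-(l₂:ℝ)) := by
            apply mul_le_mul_of_nonneg_right _ (Real.exp_nonneg _)
            apply mul_le_mul (mul_le_mul_of_nonneg_left
              (Real.rpow_le_rpow (by positivity) (by linarith) hα) ha.le)
              (by linarith) (by positivity) (by positivity)
        _ = (2*(l₂:ℝ)+1) * (a * ((l₂:ℝ)+1)^α * Real.exp (-(l₂:ℝ))) := by ring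
        _ ≤ (2*(l₂:ℝ)+1) * C l₂ := mul_le_mul_of_nonneg_left (hlow l₂) (by positivity)
    have hexp12 : Real.exp (-(l₁:ℝ)) * Real.exp (-(l₂:ℝ)) = Real.exp (-(l:ℝ)) := by
      have h12 : ((l₁:ℝ)) + (l₂:ℝ) = (l:ℝ) := by rw [← Nat.cast_add, hsum12]
      rw [← Real.exp_add, ← h12]
      ring_nf
    calc Q = (a * ((l:ℝ)/8)^α * ((l:ℝ)/4) * Real.exp (-(l₁:ℝ))) *
            (a * ((l:ℝ)/8)^α * ((l:ℝ)/4) * Real.exp (-(l₂:ℝ))) *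
            (Real.sqrt (l:ℝ) / (4*(l:ℝ))) := by
          rw [hQ, ← hexp12]; ring
      _ ≤ Γ l₁ * Γ l₂ * CG0 l₁ l₂ l ^ 2 := by
          apply mul_le_mul (mul_le_mul g1 g2 (by positivity) (hΓpos l₁).le) hCG
            (by positivity) (mul_nonneg (hΓpos l₁).le (hΓpos l₂).le)
  -- assemble
  have hcardnat : l ≤ 8 * T.card := by
    rw [hT, Nat.card_Icc]; omega
  have hcard : (l:ℝ)/8 ≤ (T.card : ℝ) := by
    rw [div_le_iff₀ (by norm_num : (0:ℝ) < 8)]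
    have h1 : l ≤ T.card * 8 := by omega
    calc (l:ℝ) ≤ ((T.card * 8 : ℕ) : ℝ) := Nat.cast_le.mpr h1
      _ = (T.card : ℝ) * 8 := by push_cast; ring
  have step1 : (T.card : ℝ) * Q ≤ ∑ l₁ ∈ T, Γ l₁ * Γ (l - l₁) * CG0 l₁ (l - l₁) l ^ 2 := by
    have := Finset.card_nsmul_le_sum T (fun l₁ => Γ l₁ * Γ (l - l₁) * CG0 l₁ (l - l₁) l ^ 2) Q key3
    rwa [nsmul_eq_mul] at this
  have step2 : ∑ l₁ ∈ T, Γ l₁ * Γ (l - l₁) * CG0 l₁ (l - l₁) l ^ 2 ≤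
      ∑ l₁ ∈ T, ∑' l₂, Γ l₁ * Γ l₂ * CG0 l₁ l₂ l ^ 2 := by
    apply Finset.sum_le_sum
    intro l₁ _
    exact Summable.le_tsum (hinner l₁) (l - l₁) (fun j _ => hterm_nonneg l₁ j)
  have step3 : ∑ l₁ ∈ T, ∑' l₂, Γ l₁ * Γ l₂ * CG0 l₁ l₂ l ^ 2 ≤
      ∑' l₁, ∑' l₂, Γ l₁ * Γ l₂ * CG0 l₁ l₂ l ^ 2 :=
    Summable.sum_le_tsum T (fun i _ => tsum_nonneg (fun l₂ => hterm_nonneg i l₂)) houter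
  have final : a^2 / (512 * (8:ℝ)^α * (8:ℝ)^α) * Real.exp (-(l:ℝ)) *
      (l : ℝ) ^ (2 * (α + 1) + 1/2) = ((l:ℝ)/8) * Q := by
    have hrw : (l : ℝ) ^ (2 * (α + 1) + 1/2) =
        (l:ℝ)^α * (l:ℝ)^α * ((l:ℝ)^(2:ℕ) * Real.sqrt (l:ℝ)) := by
      rw [Real.sqrt_eq_rpow, ← Real.rpow_natCast (l:ℝ) 2, ← Real.rpow_add hl0,
        ← Real.rpow_add hl0, ← Real.rpow_add hl0]
      congr 1
      push_cast; ring
    rw [hrw, hQ, Real.div_rpow (by positivity) (by norm_num)]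
    field_simp
    ring
  calc a^2 / (512 * (8:ℝ)^α * (8:ℝ)^α) * Real.exp (-(l:ℝ)) * (l : ℝ) ^ (2 * (α + 1) + 1/2)
      = ((l:ℝ)/8) * Q := final
    _ ≤ (T.card : ℝ) * Q := mul_le_mul_of_nonneg_right hcard hQnn
    _ ≤ ∑ l₁ ∈ T, Γ l₁ * Γ (l - l₁) * CG0 l₁ (l - l₁) l ^ 2 := step1
    _ ≤ ∑ l₁ ∈ T, ∑' l₂, Γ l₁ * Γ l₂ * CG0 l₁ l₂ l ^ 2 := step2
    _ ≤ ∑' l₁, ∑' l₂, Γ l₁ * Γ l₂ * CG0 l₁ l₂ l ^ 2 := step3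


end
end
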